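/- Let X and Y be Polish spaces with their Borel σ-algebras, d_X : X × X → ℝ≥0∞ and d_Y : Y × Y → ℝ≥0∞ Borel measurable cost functions, and T : X → Y a Borel measurable map that is an isometry for these costs: d_Y(T x, T x') = d_X(x, x') for all x, x' ∈ X. Then the pushforward preserves Wasserstein cost: W(d_Y)(T_# a, T_# b) = W(d_X)(a, b) for all Borel probability measures a, b on X. -/

import Mathlib

open MeasureTheory
open scoped ENNReal

/-- The Wasserstein (Kantorovich) cost: infimum of the transport cost over all
couplings of `μ` and `ν`. -/
noncomputable def wassersteinCost {Z : Type*} [MeasurableSpace Z]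
    (c : Z × Z → ℝ≥0∞) (μ ν : Measure Z) : ℝ≥0∞ :=
  ⨅ (S : Measure (Z × Z)) (_ : IsProbabilityMeasure S)
    (_ : S.map Prod.fst = μ) (_ : S.map Prod.snd = ν), ∫⁻ p, c p ∂S

/-!
A coupling of `a` and `b` pushes forward along `T × T` to a coupling of `T_# a` and `T_# b`
of the same cost. Conversely, disintegrating `a` and `b` along `T` gives Markov kernels
`κ_a, κ_b` from `Y` to `X` with `κ_a ∘ T_# a = a` and `κ_b ∘ T_# b = b`, where `κ_a y` and
`κ_b y` live on the fibre `T⁻¹ {y}`. For a coupling `P` of `T_# a` and `T_# b`, the measure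
`(κ_a ∥ κ_b) ∘ P` is then a coupling of `a` and `b`, and it has the cost of `P` because
`d_X (x, x') = d_Y (y, y')` on `T⁻¹ {y} × T⁻¹ {y'}`.
-/

open ProbabilityTheory

section Coupling

variable {Z : Type*} [MeasurableSpace Z] {c : Z × Z → ℝ≥0∞} {μ ν : Measure Z}

lemma wassersteinCost_le_lintegral {S : Measure (Z × Z)} [hS : IsProbabilityMeasure S]
    (h₁ : S.map Prod.fst = μ) (h₂ : S.map Prod.snd = ν) :
    wassersteinCost c μ ν ≤ ∫⁻ p, c p ∂S :=
  iInf_le_of_le S <| iInf_le_of_le hS <| iInf_le_of_le h₁ <| iInf_le_of_le h₂ le_rfl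

lemma le_wassersteinCost {w : ℝ≥0∞}
    (h : ∀ S : Measure (Z × Z), IsProbabilityMeasure S → S.map Prod.fst = μ →
      S.map Prod.snd = ν → w ≤ ∫⁻ p, c p ∂S) :
    w ≤ wassersteinCost c μ ν :=
  le_iInf fun S => le_iInf fun hS => le_iInf fun h₁ => le_iInf fun h₂ => h S hS h₁ h₂

end Coupling

namespace MeasureTheory.Measure

variable {α β γ δ : Type*} [MeasurableSpace α] [MeasurableSpace β] [MeasurableSpace γ]
  [MeasurableSpace δ]

lemma fst_parallelComp_comp (κ : Kernel α β) [IsSFiniteKernel κ] (η : Kernel γ δ)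
    [IsMarkovKernel η] (P : Measure (α × γ)) :
    ((κ ∥ₖ η) ∘ₘ P).fst = κ ∘ₘ P.fst := by
  ext s hs
  rw [fst_apply hs, bind_apply (measurable_fst hs) (Kernel.aemeasurable _),
    bind_apply hs κ.aemeasurable, Measure.fst, lintegral_map (κ.measurable_coe hs) measurable_fst]
  refine lintegral_congr fun p => ?_
  rw [← Set.prod_univ, Kernel.parallelComp_apply_prod, measure_univ, mul_one]

lemma snd_parallelComp_comp (κ : Kernel α β) [IsMarkovKernel κ] (η : Kernel γ δ)
    [IsSFiniteKernel η] (P : Measure (α × γ)) :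
    ((κ ∥ₖ η) ∘ₘ P).snd = η ∘ₘ P.snd := by
  ext s hs
  rw [snd_apply hs, bind_apply (measurable_snd hs) (Kernel.aemeasurable _),
    bind_apply hs η.aemeasurable, Measure.snd, lintegral_map (η.measurable_coe hs) measurable_snd]
  refine lintegral_congr fun p => ?_
  rw [← Set.univ_prod, Kernel.parallelComp_apply_prod, measure_univ, one_mul]

end MeasureTheory.Measure

section Disintegration

variable {X Y : Type*} [MeasurableSpace X] [StandardBorelSpace X] [Nonempty X]
  [MeasurableSpace Y] {T : X → Y} (μ : Measure X) [IsFiniteMeasure μ]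

lemma condDistrib_id_comp_map (hT : Measurable T) : condDistrib id T μ ∘ₘ μ.map T = μ := by
  simpa using condDistrib_comp_map hT.aemeasurable aemeasurable_id

lemma ae_ae_condDistrib_id_eq [MeasurableEq Y] (hT : Measurable T) :
    ∀ᵐ y ∂μ.map T, ∀ᵐ x ∂condDistrib id T μ y, T x = y := by
  have hgraph : ∀ᵐ p ∂(μ.map T ⊗ₘ condDistrib id T μ), T p.2 = p.1 := by
    rw [compProd_map_condDistrib aemeasurable_id,
      ae_map_iff (hT.prodMk measurable_id).aemeasurable
        (measurableSet_eq_fun (f := fun p : Y × X => T p.2) (hT.comp measurable_snd)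
          measurable_fst)]
    exact ae_of_all _ fun _ => rfl
  exact Measure.ae_ae_of_ae_compProd hgraph

end Disintegration

section Pushforward

variable {X Y : Type*} [MeasurableSpace X] [MeasurableSpace Y]
  {dX : X × X → ℝ≥0∞} {dY : Y × Y → ℝ≥0∞} {T : X → Y}

lemma wassersteinCost_map_le (hT : Measurable T)
    (hT_lip : ∀ x x', dY (T x, T x') ≤ dX (x, x')) (a b : Measure X) :
    wassersteinCost dY (a.map T) (b.map T) ≤ wassersteinCost dX a b := by
  refine le_wassersteinCost fun S _ h₁ h₂ => ?_
  have hTT : Measurable (Prod.map T T) := hT.prodMap hT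
  have := Measure.isProbabilityMeasure_map (μ := S) hTT.aemeasurable
  have hS₁ : (S.map (Prod.map T T)).map Prod.fst = a.map T := by
    rw [Measure.map_map measurable_fst hTT, ← h₁, Measure.map_map hT measurable_fst]; rfl
  have hS₂ : (S.map (Prod.map T T)).map Prod.snd = b.map T := by
    rw [Measure.map_map measurable_snd hTT, ← h₂, Measure.map_map hT measurable_snd]; rfl
  calc wassersteinCost dY (a.map T) (b.map T)
      ≤ ∫⁻ q, dY q ∂S.map (Prod.map T T) := wassersteinCost_le_lintegral hS₁ hS₂
    _ ≤ ∫⁻ p, dY (Prod.map T T p) ∂S := lintegral_map_le _ _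
    _ ≤ ∫⁻ p, dX p ∂S := lintegral_mono fun p => hT_lip p.1 p.2

lemma le_wassersteinCost_map [StandardBorelSpace X] [MeasurableEq Y] (hT : Measurable T)
    (hT_colip : ∀ x x', dX (x, x') ≤ dY (T x, T x')) (a b : Measure X) :
    wassersteinCost dX a b ≤ wassersteinCost dY (a.map T) (b.map T) := by
  refine le_wassersteinCost fun P _ h₁ h₂ => ?_
  have : IsProbabilityMeasure (a.map T) :=
    h₁ ▸ Measure.isProbabilityMeasure_map measurable_fst.aemeasurable
  have : IsProbabilityMeasure (b.map T) :=
    h₂ ▸ Measure.isProbabilityMeasure_map measurable_snd.aemeasurable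
  have := Measure.isProbabilityMeasure_of_map (μ := a) T
  have := Measure.isProbabilityMeasure_of_map (μ := b) T
  have := nonempty_of_isProbabilityMeasure a
  set K := condDistrib id T a ∥ₖ condDistrib id T b
  have hS₁ : (K ∘ₘ P).map Prod.fst = a := by
    rw [← Measure.fst, Measure.fst_parallelComp_comp, Measure.fst, h₁,
      condDistrib_id_comp_map a hT]
  have hS₂ : (K ∘ₘ P).map Prod.snd = b := by
    rw [← Measure.snd, Measure.snd_parallelComp_comp, Measure.snd, h₂,
      condDistrib_id_comp_map b hT]
  have hfibre₁ : ∀ᵐ q ∂P, ∀ᵐ x ∂condDistrib id T a q.1, T x = q.1 :=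
    ae_of_ae_map measurable_fst.aemeasurable (h₁ ▸ ae_ae_condDistrib_id_eq a hT)
  have hfibre₂ : ∀ᵐ q ∂P, ∀ᵐ x ∂condDistrib id T b q.2, T x = q.2 :=
    ae_of_ae_map measurable_snd.aemeasurable (h₂ ▸ ae_ae_condDistrib_id_eq b hT)
  have hcost : ∀ᵐ q ∂P, ∫⁻ p, dX p ∂K q ≤ dY q := by
    filter_upwards [hfibre₁, hfibre₂] with q hq₁ hq₂
    have hq : ∀ᵐ p ∂K q, dX p ≤ dY q := by
      rw [Kernel.parallelComp_apply]
      filter_upwards [Measure.quasiMeasurePreserving_fst.ae hq₁,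
        Measure.quasiMeasurePreserving_snd.ae hq₂] with p hp₁ hp₂
      simpa [hp₁, hp₂] using hT_colip p.1 p.2
    simpa using lintegral_mono_ae hq
  calc wassersteinCost dX a b
      ≤ ∫⁻ p, dX p ∂K ∘ₘ P := wassersteinCost_le_lintegral hS₁ hS₂
    _ ≤ ∫⁻ q, ∫⁻ p, dX p ∂K q ∂P := Measure.lintegral_bind_le _ _ _
    _ ≤ ∫⁻ q, dY q ∂P := lintegral_mono_ae hcost

end Pushforward

theorem pushforward_isometry_wasserstein_general
    {X Y : Type*} [TopologicalSpace X] [PolishSpace X] [MeasurableSpace X] [BorelSpace X]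
    [TopologicalSpace Y] [PolishSpace Y] [MeasurableSpace Y] [BorelSpace Y]
    (dX : X × X → ℝ≥0∞)
    (dY : Y × Y → ℝ≥0∞)
    (T : X → Y) (hT : Measurable T)
    (hT_iso : ∀ x x', dY (T x, T x') = dX (x, x'))
    (a b : Measure X) :
    wassersteinCost dY (a.map T) (b.map T) = wassersteinCost dX a b :=
  le_antisymm (wassersteinCost_map_le hT (fun x x' => (hT_iso x x').le) a b)
    (le_wassersteinCost_map hT (fun x x' => (hT_iso x x').ge) a b)

/-- pushing forward along a measurable map between Polish spaces that
is an isometry for the cost functions preserves the Wasserstein cost. -/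
theorem pushforward_isometry_wasserstein
    {X Y : Type*} [TopologicalSpace X] [PolishSpace X] [MeasurableSpace X] [BorelSpace X]
    [TopologicalSpace Y] [PolishSpace Y] [MeasurableSpace Y] [BorelSpace Y]
    (dX : X × X → ℝ≥0∞) (hdX : Measurable dX)
    (dY : Y × Y → ℝ≥0∞) (hdY : Measurable dY)
    (T : X → Y) (hT : Measurable T)
    (hT_iso : ∀ x x', dY (T x, T x') = dX (x, x'))
    (a b : Measure X) [IsProbabilityMeasure a] [IsProbabilityMeasure b] :
    wassersteinCost dY (a.map T) (b.map T) = wassersteinCost dX a b :=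
  pushforward_isometry_wasserstein_general dX dY T hT hT_iso a b
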